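/- arXiv:1611.04074 — 2 statements merged into one kernel-verified Lean document; each statement's English description precedes it below -/
import Mathlib

section
/- Let n ≥ 1 and let f_1, …, f_n : ℝ^d → ℝ each be convex and L_i-smooth, let f = (1/n)·Σ_{i=1}^n f_i be L_f-smooth, and let L_Q = max_i L_i. Let α₁, α₂, α₃ ∈ (0,1) with α₁ + α₂ + α₃ = 1 and let L̄ ≥ L_Q/α₃ + L_f. Given points x^{ag}, x_{prev}, x̃, x ∈ ℝ^d, set x^{md} = α₁·x^{ag} + α₂·x_{prev} + α₃·x̃, and for each i ∈ {1,…,n} set v^i = ∇f_i(x^{md}) − ∇f_i(x̃) + ∇f(x̃); let x^i ∈ ℝ^d be arbitrary points and set x^{ag,i} = α₁·x^{ag} + α₂·x^i + α₃·x̃. Then (1/n)·Σ_{i=1}^n f(x^{ag,i}) ≤ α₁·f(x^{ag}) + α₂·f(x) + α₃·f(x̃) + α₂·(1/n)·Σ_{i=1}^n ⟨v^i, x^i − x⟩ + (α₂²·L̄/2)·(1/n)·Σ_{i=1}^n ‖x^i − x_{prev}‖². -/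
/-!
Write `∇F(x^md) = v^i + δ^i`. The descent lemma for `F` at `x^md`, combined with convexity of `F`
towards `x^ag` and `x` (weights `α₁`, `α₂`) and the exact first-order expansion towards `x̃`
(weight `α₃`), bounds each `F(x^{ag,i})`; the `α₃` part leaves over `-α₃ D_F(x̃, x^md)`, a Bregman
divergence. The errors `δ^i` have mean zero, so the variance bound "at most the second moment"
and co-coercivity of the `∇f_i` give `∑ ‖δ^i‖² ≤ 2 L_Q n D_F(x̃, x^md)`. Cauchy–Schwarz and AM–GM
then pay for the cross term `α₂ ∑ ⟪δ^i, x^i - x_prev⟫` with that leftover, at the price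
`α₂² L_Q / (2 α₃) ∑ ‖x^i - x_prev‖²`.
-/

open RealInnerProductSpace Set

section InnerProduct

variable {E : Type*} [NormedAddCommGroup E] [InnerProductSpace ℝ E] {ι : Type*} [Fintype ι]

lemma sum_norm_sub_sq_le_sum_norm_sq (a : ι → E) (m : E)
    (hm : (Fintype.card ι : ℝ) • m = ∑ i, a i) :
    ∑ i, ‖a i - m‖ ^ 2 ≤ ∑ i, ‖a i‖ ^ 2 := by
  have hexpand : ∑ i, ‖a i - m‖ ^ 2
      = ∑ i, ‖a i‖ ^ 2 - 2 * ⟪∑ i, a i, m⟫ + Fintype.card ι * ‖m‖ ^ 2 := by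
    simp only [norm_sub_sq_real, Finset.sum_add_distrib, Finset.sum_sub_distrib, sum_inner,
      Finset.sum_const, Finset.card_univ, nsmul_eq_mul, Finset.mul_sum]
  have hinner : ⟪∑ i, a i, m⟫ = Fintype.card ι * ‖m‖ ^ 2 := by
    rw [← hm, real_inner_smul_left, real_inner_self_eq_norm_sq]
  have hnonneg : 0 ≤ (Fintype.card ι : ℝ) * ‖m‖ ^ 2 := by positivity
  linarith

/-- Cauchy–Schwarz followed by AM–GM; since `∑ i, δ i = 0`, the point `x` may be replaced by `p`. -/
lemma mul_sum_inner_le_of_sum_eq_zero {δ z : ι → E} {L S α β : ℝ} (hδ : ∑ i, δ i = 0)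
    (hδS : ∑ i, ‖δ i‖ ^ 2 ≤ 2 * L * S) (hS : 0 ≤ S) (hα : 0 < α) (hβ : 0 ≤ β) (x p : E)
    (hL : ∀ i, 0 ≤ L * ‖z i - p‖) :
    β * ∑ i, ⟪δ i, z i - x⟫ ≤ α * S + β ^ 2 * L / (2 * α) * ∑ i, ‖z i - p‖ ^ 2 := by
  set T := ∑ i, ‖δ i‖ * ‖z i - p‖
  set W := ∑ i, ‖z i - p‖ ^ 2
  have hshift : ∑ i, ⟪δ i, z i - x⟫ = ∑ i, ⟪δ i, z i - p⟫ := by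
    have hzero : ∑ i, ⟪δ i, p - x⟫ = 0 := by rw [← sum_inner, hδ, inner_zero_left]
    simp only [show ∀ i, z i - x = (z i - p) + (p - x) from fun i => by abel, inner_add_right,
      Finset.sum_add_distrib, hzero, add_zero]
  have hCS : ∑ i, ⟪δ i, z i - p⟫ ≤ T := Finset.sum_le_sum fun i _ => real_inner_le_norm _ _
  have hT : T ^ 2 ≤ 2 * L * S * W :=
    (Finset.sum_mul_sq_le_sq_mul_sq _ _ _).trans
      (mul_le_mul_of_nonneg_right hδS (Finset.sum_nonneg fun i _ => by positivity))
  have hLW : 0 ≤ L * W := by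
    rw [Finset.mul_sum]
    refine Finset.sum_nonneg fun i _ => ?_
    rw [pow_two, ← mul_assoc]
    exact mul_nonneg (hL i) (norm_nonneg _)
  have hA : 0 ≤ α * S := mul_nonneg hα.le hS
  have hB : 0 ≤ β ^ 2 * L / (2 * α) * W := by
    rw [show β ^ 2 * L / (2 * α) * W = β ^ 2 / (2 * α) * (L * W) by ring]
    exact mul_nonneg (by positivity) hLW
  have hprod : (β * T) ^ 2 ≤ 4 * (α * S) * (β ^ 2 * L / (2 * α) * W) := by
    have : 4 * (α * S) * (β ^ 2 * L / (2 * α) * W) = β ^ 2 * (2 * L * S * W) := by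
      field_simp; ring
    rw [this, mul_pow]
    exact mul_le_mul_of_nonneg_left hT (sq_nonneg β)
  have hAMGM : β * T ≤ α * S + β ^ 2 * L / (2 * α) * W :=
    (le_abs_self _).trans <|
      abs_le_of_sq_le_sq (hprod.trans (four_mul_le_sq_add _ _)) (add_nonneg hA hB)
  rw [hshift]
  exact (mul_le_mul_of_nonneg_left hCS hβ).trans hAMGM

lemma convexOn_const_mul_sum {f : ι → E → ℝ} {c : ℝ} (hc : 0 ≤ c)
    (hconv : ∀ i, ConvexOn ℝ univ (f i)) :
    ConvexOn ℝ univ (fun y => c * ∑ i, f i y) := by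
  have hsum : ∀ s : Finset ι, ConvexOn ℝ univ (fun y => ∑ i ∈ s, f i y) := by
    classical
    intro s
    induction s using Finset.induction_on with
    | empty => simpa using convexOn_const (0 : ℝ) convex_univ
    | insert i s hi ih =>
      simp_rw [Finset.sum_insert hi]
      exact (hconv i).add ih
  simpa only [smul_eq_mul] using (hsum Finset.univ).smul hc

end InnerProduct

section Gradient

variable {E : Type*} [NormedAddCommGroup E] [InnerProductSpace ℝ E] [CompleteSpace E]

noncomputable def bregmanDiv (h : E → ℝ) (y x : E) : ℝ :=
  h y - h x - ⟪gradient h x, y - x⟫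

lemma hasDerivAt_comp_add_smul {h : E → ℝ} (hd : Differentiable ℝ h) (x w : E) (t : ℝ) :
    HasDerivAt (fun s : ℝ => h (x + s • w)) ⟪gradient h (x + t • w), w⟫ t := by
  have hline : HasDerivAt (fun s : ℝ => x + s • w) w t := by
    simpa using ((hasDerivAt_id t).smul_const w).const_add x
  exact (hd _).hasGradientAt.hasFDerivAt.comp_hasDerivAt t hline

lemma ConvexOn.bregmanDiv_nonneg {h : E → ℝ} (hc : ConvexOn ℝ univ h) (hd : Differentiable ℝ h)
    (y x : E) : 0 ≤ bregmanDiv h y x := by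
  have hline : ConvexOn ℝ univ (fun s : ℝ => h (x + s • (y - x))) := by
    simpa [Function.comp_def, AffineMap.lineMap_apply, add_comm] using
      hc.comp_affineMap (AffineMap.lineMap x y : ℝ →ᵃ[ℝ] E)
  have hslope := hline.le_slope_of_hasDerivAt (mem_univ 0) (mem_univ 1) one_pos
    (by simpa only [zero_smul, add_zero] using hasDerivAt_comp_add_smul hd x (y - x) 0)
  simp only [slope_def_field, zero_smul, add_zero, one_smul, add_sub_cancel, sub_zero,
    div_one] at hslope
  unfold bregmanDiv
  linarith

lemma bregmanDiv_le_of_lipschitz {h : E → ℝ} {L : ℝ} (hd : Differentiable ℝ h)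
    (hlip : ∀ u v, ‖gradient h u - gradient h v‖ ≤ L * ‖u - v‖) (y x : E) :
    bregmanDiv h y x ≤ L / 2 * ‖y - x‖ ^ 2 := by
  set w := y - x
  set φ : ℝ → ℝ := fun t => h (x + t • w) - t * ⟪gradient h x, w⟫ - L / 2 * ‖w‖ ^ 2 * t ^ 2
  have hφ : ∀ t, HasDerivAt φ
      (⟪gradient h (x + t • w), w⟫ - ⟪gradient h x, w⟫ - L * ‖w‖ ^ 2 * t) t := by
    intro t
    refine (((hasDerivAt_comp_add_smul hd x w t).sub ((hasDerivAt_id t).mul_const _)).sub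
      ((hasDerivAt_pow 2 t).const_mul (L / 2 * ‖w‖ ^ 2))).congr_deriv ?_
    simp only [Nat.cast_ofNat]
    ring
  have hanti : AntitoneOn φ (Ici 0) := by
    refine antitoneOn_of_hasDerivWithinAt_nonpos (convex_Ici 0)
      (fun t _ => (hφ t).continuousAt.continuousWithinAt) (fun t _ => (hφ t).hasDerivWithinAt) ?_
    rintro t ht
    rw [interior_Ici, mem_Ioi] at ht
    have hbound : ⟪gradient h (x + t • w) - gradient h x, w⟫ ≤ L * ‖w‖ ^ 2 * t :=
      calc ⟪gradient h (x + t • w) - gradient h x, w⟫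
          ≤ ‖gradient h (x + t • w) - gradient h x‖ * ‖w‖ := real_inner_le_norm _ _
        _ ≤ L * ‖x + t • w - x‖ * ‖w‖ := by gcongr; exact hlip _ _
        _ = L * ‖w‖ ^ 2 * t := by
          rw [add_sub_cancel_left, norm_smul, Real.norm_of_nonneg ht.le]; ring
    rw [inner_sub_left] at hbound
    linarith
  have h01 := hanti self_mem_Ici (mem_Ici.2 zero_le_one) zero_le_one
  simp only [φ, zero_smul, add_zero, one_smul, zero_mul, sub_zero, one_mul, one_pow, mul_one,
    ne_eq, OfNat.ofNat_ne_zero, not_false_eq_true, zero_pow] at h01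
  have : x + w = y := add_sub_cancel x y
  rw [this] at h01
  unfold bregmanDiv
  linarith

lemma ConvexOn.norm_sub_gradient_sq_le {h : E → ℝ} {L : ℝ} (hc : ConvexOn ℝ univ h)
    (hd : Differentiable ℝ h) (hlip : ∀ u v, ‖gradient h u - gradient h v‖ ≤ L * ‖u - v‖)
    (y x : E) : ‖gradient h y - gradient h x‖ ^ 2 ≤ 2 * L * bregmanDiv h y x := by
  set g := gradient h y - gradient h x
  rcases le_or_gt L 0 with hL | hL
  · have hzero : L * ‖y - x‖ = 0 := le_antisymm
      (mul_nonpos_of_nonpos_of_nonneg hL (norm_nonneg _)) ((norm_nonneg _).trans (hlip y x))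
    have hg : ‖g‖ = 0 := le_antisymm (hzero ▸ hlip y x) (norm_nonneg _)
    rcases mul_eq_zero.1 hzero with rfl | hyx
    · simp [hg]
    · rw [norm_eq_zero, sub_eq_zero] at hyx
      simp [g, hyx, bregmanDiv]
  -- convexity at `x` and the descent lemma at `y`, both evaluated at `y - L⁻¹ • g`
  set w := y - L⁻¹ • g
  have hlow := hc.bregmanDiv_nonneg hd w x
  have hup := bregmanDiv_le_of_lipschitz hd hlip w y
  have hwy : w - y = -(L⁻¹ • g) := by simp [w]
  have hwx : w - x = (y - x) - L⁻¹ • g := by simp only [w]; abel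
  simp only [bregmanDiv, hwy, hwx, norm_neg, norm_smul, inner_neg_right, inner_sub_right,
    real_inner_smul_right, Real.norm_of_nonneg (inv_nonneg.2 hL.le)] at hlow hup ⊢
  have hgg : ⟪gradient h y, g⟫ - ⟪gradient h x, g⟫ = ‖g‖ ^ 2 := by
    rw [← inner_sub_left, real_inner_self_eq_norm_sq]
  have hsq : L / 2 * (L⁻¹ * ‖g‖) ^ 2 = L⁻¹ * ‖g‖ ^ 2 / 2 := by field_simp
  have hkey : L⁻¹ * ‖g‖ ^ 2 / 2 ≤ h y - h x - (⟪gradient h x, y⟫ - ⟪gradient h x, x⟫) := by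
    linear_combination hlow + hup + hsq - L⁻¹ * hgg
  calc ‖g‖ ^ 2 = 2 * L * (L⁻¹ * ‖g‖ ^ 2 / 2) := by field_simp
    _ ≤ _ := by gcongr

/-- The descent lemma at `α₁ • a + α₂ • p + α₃ • t`, plus convexity towards `a` and `x` with
weights `α₁` and `α₂`; the `α₃` share is kept exactly, as a Bregman divergence. -/
lemma ConvexOn.le_three_point {F : E → ℝ} {Lf : ℝ} (hc : ConvexOn ℝ univ F)
    (hd : Differentiable ℝ F) (hlip : ∀ u v, ‖gradient F u - gradient F v‖ ≤ Lf * ‖u - v‖)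
    {α₁ α₂ α₃ : ℝ} (hα₁ : 0 ≤ α₁) (hα₂ : 0 ≤ α₂) (hsum : α₁ + α₂ + α₃ = 1) (a p t x z : E) :
    F (α₁ • a + α₂ • z + α₃ • t)
      ≤ α₁ * F a + α₂ * F x + α₃ * (F t - bregmanDiv F t (α₁ • a + α₂ • p + α₃ • t))
        + α₂ * ⟪gradient F (α₁ • a + α₂ • p + α₃ • t), z - x⟫ + α₂ ^ 2 * Lf / 2 * ‖z - p‖ ^ 2 := by
  set m := α₁ • a + α₂ • p + α₃ • t
  have hstep : α₁ • a + α₂ • z + α₃ • t - m = α₂ • (z - p) := by simp only [m]; module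
  have hdesc := bregmanDiv_le_of_lipschitz hd hlip (α₁ • a + α₂ • z + α₃ • t) m
  have ha := mul_nonneg hα₁ (hc.bregmanDiv_nonneg hd a m)
  have hx := mul_nonneg hα₂ (hc.bregmanDiv_nonneg hd x m)
  have hm : ⟪gradient F m, m⟫ = α₁ * ⟪gradient F m, a⟫ + α₂ * ⟪gradient F m, p⟫
      + α₃ * ⟪gradient F m, t⟫ := by
    simp only [m, inner_add_right, real_inner_smul_right]
  have hconst : ∀ r : ℝ, r = (α₁ + α₂ + α₃) * r := fun r => by rw [hsum, one_mul]
  rw [bregmanDiv, hstep, norm_smul, Real.norm_of_nonneg hα₂] at hdesc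
  simp only [bregmanDiv, inner_sub_right, real_inner_smul_right] at hdesc ha hx ⊢
  linarith [hconst (F m), hconst ⟪gradient F m, m⟫]

section Average

variable {ι : Type*} [Fintype ι] {f : ι → E → ℝ}

lemma hasGradientAt_const_mul_sum (c : ℝ) (hd : ∀ i, Differentiable ℝ (f i)) (x : E) :
    HasGradientAt (fun y => c * ∑ i, f i y) (c • ∑ i, gradient (f i) x) x := by
  have hsum : HasFDerivAt (fun y => ∑ i, f i y)
      (∑ i, InnerProductSpace.toDual ℝ E (gradient (f i) x)) x :=
    HasFDerivAt.fun_sum fun i _ => ((hd i) x).hasGradientAt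
  show HasFDerivAt _ (InnerProductSpace.toDual ℝ E _) x
  rw [map_smul, map_sum]
  exact hsum.const_mul c

lemma bregmanDiv_const_mul_sum (c : ℝ) (hd : ∀ i, Differentiable ℝ (f i)) (y x : E) :
    bregmanDiv (fun z => c * ∑ i, f i z) y x = c * ∑ i, bregmanDiv (f i) y x := by
  simp only [bregmanDiv, (hasGradientAt_const_mul_sum c hd x).gradient, real_inner_smul_left,
    sum_inner, Finset.sum_sub_distrib]
  ring

variable [Nonempty ι] {F : E → ℝ}

lemma card_smul_gradient_eq_sum (hd : ∀ i, Differentiable ℝ (f i))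
    (hF : F = fun y => 1 / (Fintype.card ι : ℝ) * ∑ i, f i y) (x : E) :
    (Fintype.card ι : ℝ) • gradient F x = ∑ i, gradient (f i) x := by
  rw [hF, (hasGradientAt_const_mul_sum _ hd x).gradient, smul_smul,
    mul_one_div_cancel (Nat.cast_ne_zero.2 Fintype.card_ne_zero), one_smul]

/-- The variance is at most the second moment, and each second moment is bounded by
co-coercivity. -/
lemma sum_norm_sub_gradient_sq_le {L : ℝ} (hconv : ∀ i, ConvexOn ℝ univ (f i))
    (hd : ∀ i, Differentiable ℝ (f i))
    (hsmooth : ∀ i u v, ‖gradient (f i) u - gradient (f i) v‖ ≤ L * ‖u - v‖)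
    (hF : F = fun y => 1 / (Fintype.card ι : ℝ) * ∑ i, f i y) (u v : E) :
    ∑ i, ‖(gradient F u - gradient F v) - (gradient (f i) u - gradient (f i) v)‖ ^ 2
      ≤ 2 * L * (Fintype.card ι * bregmanDiv F v u) := by
  have hmean : (Fintype.card ι : ℝ) • (gradient F u - gradient F v)
      = ∑ i, (gradient (f i) u - gradient (f i) v) := by
    rw [smul_sub, card_smul_gradient_eq_sum hd hF, card_smul_gradient_eq_sum hd hF,
      Finset.sum_sub_distrib]
  calc _ = ∑ i, ‖(gradient (f i) u - gradient (f i) v) - (gradient F u - gradient F v)‖ ^ 2 := by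
        simp only [norm_sub_rev]
    _ ≤ ∑ i, ‖gradient (f i) u - gradient (f i) v‖ ^ 2 :=
        sum_norm_sub_sq_le_sum_norm_sq _ _ hmean
    _ ≤ ∑ i, 2 * L * bregmanDiv (f i) v u := Finset.sum_le_sum fun i _ => by
        rw [norm_sub_rev]; exact (hconv i).norm_sub_gradient_sq_le (hd i) (hsmooth i) v u
    _ = _ := by
        rw [hF, bregmanDiv_const_mul_sum _ hd, ← Finset.mul_sum]
        field_simp

theorem sum_le_of_variance_reduced_step {L Lf : ℝ} (hconv : ∀ i, ConvexOn ℝ univ (f i))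
    (hd : ∀ i, Differentiable ℝ (f i))
    (hsmooth : ∀ i u v, ‖gradient (f i) u - gradient (f i) v‖ ≤ L * ‖u - v‖)
    (hF : F = fun y => 1 / (Fintype.card ι : ℝ) * ∑ i, f i y)
    (hFsmooth : ∀ u v, ‖gradient F u - gradient F v‖ ≤ Lf * ‖u - v‖)
    {α₁ α₂ α₃ : ℝ} (hα₁ : 0 ≤ α₁) (hα₂ : 0 ≤ α₂) (hα₃ : 0 < α₃) (hsum : α₁ + α₂ + α₃ = 1)
    (a p t x : E) (z : ι → E) :
    ∑ i, F (α₁ • a + α₂ • z i + α₃ • t)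
      ≤ Fintype.card ι * (α₁ * F a + α₂ * F x + α₃ * F t)
        + α₂ * ∑ i, ⟪gradient (f i) (α₁ • a + α₂ • p + α₃ • t) - gradient (f i) t
            + gradient F t, z i - x⟫
        + α₂ ^ 2 * (L / α₃ + Lf) / 2 * ∑ i, ‖z i - p‖ ^ 2 := by
  set m := α₁ • a + α₂ • p + α₃ • t
  set v : ι → E := fun i => gradient (f i) m - gradient (f i) t + gradient F t
  set δ : ι → E := fun i => (gradient F m - gradient F t) - (gradient (f i) m - gradient (f i) t)
  set B := bregmanDiv F t m
  have hFd : Differentiable ℝ F :=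
    hF ▸ fun y => (hasGradientAt_const_mul_sum _ hd y).differentiableAt
  have hFconv : ConvexOn ℝ univ F := hF ▸ convexOn_const_mul_sum (by positivity) hconv
  have hδ : ∑ i, δ i = 0 := by
    simp only [δ, Finset.sum_sub_distrib, Finset.sum_const, Finset.card_univ,
      ← Nat.cast_smul_eq_nsmul ℝ, card_smul_gradient_eq_sum hd hF, sub_self]
  have hstep : ∀ i, F (α₁ • a + α₂ • z i + α₃ • t)
      ≤ α₁ * F a + α₂ * F x + α₃ * (F t - B) + α₂ * ⟪v i, z i - x⟫ + α₂ * ⟪δ i, z i - x⟫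
        + α₂ ^ 2 * Lf / 2 * ‖z i - p‖ ^ 2 := fun i => by
    have hsplit : gradient F m = v i + δ i := by simp only [v, δ]; abel
    have := hFconv.le_three_point hFd hFsmooth hα₁ hα₂ hsum a p t x (z i)
    rwa [hsplit, inner_add_left, mul_add, ← add_assoc] at this
  have hvar := mul_sum_inner_le_of_sum_eq_zero hδ
    (sum_norm_sub_gradient_sq_le hconv hd hsmooth hF m t)
    (mul_nonneg (Nat.cast_nonneg _) (hFconv.bregmanDiv_nonneg hFd t m)) hα₃ hα₂ x p
    (fun i => (norm_nonneg _).trans (hsmooth i (z i) p))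
  have hcoef : α₂ ^ 2 * (L / α₃ + Lf) / 2 = α₂ ^ 2 * L / (2 * α₃) + α₂ ^ 2 * Lf / 2 := by ring
  calc _ ≤ _ := Finset.sum_le_sum fun i _ => hstep i
    _ = Fintype.card ι * (α₁ * F a + α₂ * F x + α₃ * (F t - B)) + α₂ * ∑ i, ⟪v i, z i - x⟫
        + α₂ * ∑ i, ⟪δ i, z i - x⟫ + α₂ ^ 2 * Lf / 2 * ∑ i, ‖z i - p‖ ^ 2 := by
      simp only [Finset.sum_add_distrib, Finset.sum_const, Finset.card_univ, nsmul_eq_mul,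
        Finset.mul_sum, mul_add]
    _ ≤ _ := by
      rw [hcoef]
      linear_combination hvar

end Average

end Gradient

theorem stmt_3_general (d n : ℕ) (hn : 1 ≤ n)
    (f : Fin n → EuclideanSpace ℝ (Fin d) → ℝ) (L : Fin n → ℝ) (Lf : ℝ)
    (hconv : ∀ i, ConvexOn ℝ Set.univ (f i))
    (hdiff : ∀ i, Differentiable ℝ (f i))
    (hsmooth : ∀ i, ∀ u v', ‖gradient (f i) u - gradient (f i) v'‖ ≤ L i * ‖u - v'‖)
    (F : EuclideanSpace ℝ (Fin d) → ℝ)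
    (hF : F = fun x => (1 / (n : ℝ)) * ∑ i, f i x)
    (hFsmooth : ∀ u v', ‖gradient F u - gradient F v'‖ ≤ Lf * ‖u - v'‖)
    (LQ : ℝ)
    (hLQ : LQ = Finset.univ.sup' (Finset.univ_nonempty_iff.mpr ⟨⟨0, hn⟩⟩) L)
    (α₁ α₂ α₃ : ℝ) (hα₁ : α₁ ∈ Set.Ioo (0 : ℝ) 1) (hα₂ : α₂ ∈ Set.Ioo (0 : ℝ) 1)
    (hα₃ : α₃ ∈ Set.Ioo (0 : ℝ) 1) (hsum : α₁ + α₂ + α₃ = 1)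
    (Lbar : ℝ) (hLbar : LQ / α₃ + Lf ≤ Lbar)
    (xag xprev xt x : EuclideanSpace ℝ (Fin d))
    (xmd : EuclideanSpace ℝ (Fin d)) (hxmd : xmd = α₁ • xag + α₂ • xprev + α₃ • xt)
    (v : Fin n → EuclideanSpace ℝ (Fin d))
    (hv : ∀ i, v i = gradient (f i) xmd - gradient (f i) xt + gradient F xt)
    (xI : Fin n → EuclideanSpace ℝ (Fin d))
    (xagI : Fin n → EuclideanSpace ℝ (Fin d))
    (hxagI : ∀ i, xagI i = α₁ • xag + α₂ • xI i + α₃ • xt) :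
    (1 / (n : ℝ)) * ∑ i, F (xagI i)
      ≤ α₁ * F xag + α₂ * F x + α₃ * F xt
        + α₂ * ((1 / (n : ℝ)) * ∑ i, ⟪v i, xI i - x⟫)
        + (α₂ ^ 2 * Lbar / 2) * ((1 / (n : ℝ)) * ∑ i, ‖xI i - xprev‖ ^ 2) := by
  have : Nonempty (Fin n) := ⟨⟨0, hn⟩⟩
  have hsmoothQ : ∀ i u w, ‖gradient (f i) u - gradient (f i) w‖ ≤ LQ * ‖u - w‖ :=
    fun i u w => (hsmooth i u w).trans <| mul_le_mul_of_nonneg_right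
      (hLQ ▸ Finset.le_sup' L (Finset.mem_univ i)) (norm_nonneg _)
  have hsum_le := sum_le_of_variance_reduced_step hconv hdiff hsmoothQ
    (by rwa [Fintype.card_fin]) hFsmooth hα₁.1.le hα₂.1.le hα₃.1 hsum xag xprev xt x xI
  rw [Fintype.card_fin, ← hxmd] at hsum_le
  simp only [← hv, ← hxagI] at hsum_le
  have hcoef : α₂ ^ 2 * (LQ / α₃ + Lf) / 2 ≤ α₂ ^ 2 * Lbar / 2 := by gcongr
  calc _ ≤ 1 / (n : ℝ) * (n * (α₁ * F xag + α₂ * F x + α₃ * F xt)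
        + α₂ * ∑ i, ⟪v i, xI i - x⟫ + α₂ ^ 2 * (LQ / α₃ + Lf) / 2 * ∑ i, ‖xI i - xprev‖ ^ 2) :=
        mul_le_mul_of_nonneg_left hsum_le (by positivity)
    _ = α₁ * F xag + α₂ * F x + α₃ * F xt + α₂ * (1 / (n : ℝ) * ∑ i, ⟪v i, xI i - x⟫)
        + α₂ ^ 2 * (LQ / α₃ + Lf) / 2 * (1 / (n : ℝ) * ∑ i, ‖xI i - xprev‖ ^ 2) := by
        field_simp
    _ ≤ _ := by gcongr

/-- Averaged descent inequality for the SVRG-style stochastic gradient step. -/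
theorem stmt_3 (d n : ℕ) (hn : 1 ≤ n)
    (f : Fin n → EuclideanSpace ℝ (Fin d) → ℝ) (L : Fin n → ℝ) (Lf : ℝ)
    (hconv : ∀ i, ConvexOn ℝ Set.univ (f i))
    (hdiff : ∀ i, Differentiable ℝ (f i))
    (hsmooth : ∀ i, ∀ u v', ‖gradient (f i) u - gradient (f i) v'‖ ≤ L i * ‖u - v'‖)
    (F : EuclideanSpace ℝ (Fin d) → ℝ)
    (hF : F = fun x => (1 / (n : ℝ)) * ∑ i, f i x)
    (hFdiff : Differentiable ℝ F)
    (hFsmooth : ∀ u v', ‖gradient F u - gradient F v'‖ ≤ Lf * ‖u - v'‖)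
    (LQ : ℝ)
    (hLQ : LQ = Finset.univ.sup' (Finset.univ_nonempty_iff.mpr ⟨⟨0, hn⟩⟩) L)
    (α₁ α₂ α₃ : ℝ) (hα₁ : α₁ ∈ Set.Ioo (0 : ℝ) 1) (hα₂ : α₂ ∈ Set.Ioo (0 : ℝ) 1)
    (hα₃ : α₃ ∈ Set.Ioo (0 : ℝ) 1) (hsum : α₁ + α₂ + α₃ = 1)
    (Lbar : ℝ) (hLbar : LQ / α₃ + Lf ≤ Lbar)
    (xag xprev xt x : EuclideanSpace ℝ (Fin d))
    (xmd : EuclideanSpace ℝ (Fin d)) (hxmd : xmd = α₁ • xag + α₂ • xprev + α₃ • xt)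
    (v : Fin n → EuclideanSpace ℝ (Fin d))
    (hv : ∀ i, v i = gradient (f i) xmd - gradient (f i) xt + gradient F xt)
    (xI : Fin n → EuclideanSpace ℝ (Fin d))
    (xagI : Fin n → EuclideanSpace ℝ (Fin d))
    (hxagI : ∀ i, xagI i = α₁ • xag + α₂ • xI i + α₃ • xt) :
    (1 / (n : ℝ)) * ∑ i, F (xagI i)
      ≤ α₁ * F xag + α₂ * F x + α₃ * F xt
        + α₂ * ((1 / (n : ℝ)) * ∑ i, ⟪v i, xI i - x⟫)
        + (α₂ ^ 2 * Lbar / 2) * ((1 / (n : ℝ)) * ∑ i, ‖xI i - xprev‖ ^ 2) :=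
  stmt_3_general d n hn f L Lf hconv hdiff hsmooth F hF hFsmooth LQ hLQ α₁ α₂ α₃ hα₁ hα₂ hα₃ hsum
    Lbar hLbar xag xprev xt x xmd hxmd v hv xI xagI hxagI
end

section
/- Define the sequence (α₂,s) for s ≥ 1 by α₂,1 = 2/3 and α₂,s+1 = h(α₂,s). Then for every natural number s ≥ 1, 0 < α₂,s ≤ 2/(s+2). -/
/-! `x = h a` is the nonnegative root of `x ^ 2 + a ^ 2 * x = a ^ 2`, so `h a ≤ c` as soon as
`a ^ 2 * (1 - c) ≤ c ^ 2`. With `a ≤ 2 / t` and `c = 2 / (t + 1)` this reduces to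
`(t - 1) * (t + 1) ≤ t ^ 2`, and induction on `s` (with `t = s + 2`) gives the bound. -/

noncomputable def h (a : ℝ) : ℝ := (Real.sqrt (a ^ 4 + 4 * a ^ 2) - a ^ 2) / 2

lemma h_sq_add_sq_mul (a : ℝ) : h a ^ 2 + a ^ 2 * h a = a ^ 2 := by
  have hs : Real.sqrt (a ^ 4 + 4 * a ^ 2) ^ 2 = a ^ 4 + 4 * a ^ 2 :=
    Real.sq_sqrt (by positivity)
  unfold h
  linear_combination hs / 4

lemma h_pos {a : ℝ} (ha : a ≠ 0) : 0 < h a := by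
  have hlt : a ^ 2 < Real.sqrt (a ^ 4 + 4 * a ^ 2) := by
    rw [Real.lt_sqrt (by positivity)]
    have : 0 < a ^ 2 := by positivity
    nlinarith
  unfold h
  linarith

lemma h_le_of_sq_mul_le {a c : ℝ} (hc : 0 ≤ c) (hac : a ^ 2 * (1 - c) ≤ c ^ 2) : h a ≤ c := by
  by_contra! hlt
  have hsq : c ^ 2 < h a ^ 2 := by gcongr
  have hmul : a ^ 2 * c ≤ a ^ 2 * h a := by gcongr
  linarith [h_sq_add_sq_mul a]

lemma h_le_two_div_add_one {a t : ℝ} (ht : 1 ≤ t) (ha : 0 ≤ a) (hat : a ≤ 2 / t) :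
    h a ≤ 2 / (t + 1) := by
  apply h_le_of_sq_mul_le (by positivity)
  have hsq : a ^ 2 ≤ (2 / t) ^ 2 := by gcongr
  have hc : 1 - 2 / (t + 1) = (t - 1) / (t + 1) := by field_simp; ring
  calc a ^ 2 * (1 - 2 / (t + 1)) ≤ (2 / t) ^ 2 * ((t - 1) / (t + 1)) := by
        rw [hc]; gcongr
    _ ≤ (2 / (t + 1)) ^ 2 := by
        rw [div_pow, div_pow, div_mul_div_comm, div_le_div_iff₀ (by positivity) (by positivity)]
        nlinarith

/-- If `α₂,1 = 2/3` and `α₂,s+1 = h(α₂,s)`, then `0 < α₂,s ≤ 2/(s+2)` for all `s ≥ 1`. -/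
theorem stmt_18 (α : ℕ → ℝ) (h1 : α 1 = 2 / 3)
    (hrec : ∀ s : ℕ, 1 ≤ s → α (s + 1) = h (α s)) :
    ∀ s : ℕ, 1 ≤ s → 0 < α s ∧ α s ≤ 2 / ((s : ℝ) + 2) := by
  intro s hs
  induction s, hs using Nat.le_induction with
  | base => rw [h1]; norm_num
  | succ n hn ih =>
    obtain ⟨hpos, hle⟩ := ih
    rw [hrec n hn, Nat.cast_succ, add_right_comm]
    exact ⟨h_pos hpos.ne', h_le_two_div_add_one (by linarith [n.cast_nonneg (α := ℝ)]) hpos.le hle⟩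
end
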